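/- arXiv:0801.3561 — 4 statements merged into one kernel-verified Lean document; each statement's English description precedes it below -/
import Mathlib

section
/- For a symmetric real n×n matrix S with Newton transformation P_r, one has trace(P_r S²) = σ₁ σ_{r+1} − (r+2) σ_{r+2}. -/
open Matrix

/-- A real symmetric matrix is Hermitian. -/
theorem Matrix.IsSymm.isHerm {n : ℕ} {S : Matrix (Fin n) (Fin n) ℝ}
    (h : S.IsSymm) : S.IsHermitian := by
  rw [Matrix.IsHermitian, Matrix.conjTranspose_eq_transpose_of_trivial]; exact h

/-- The `r`-th elementary symmetric function of the eigenvalues of a real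
symmetric matrix. -/
noncomputable def sigmaEig {n : ℕ} (S : Matrix (Fin n) (Fin n) ℝ)
    (hS : S.IsSymm) (r : ℕ) : ℝ :=
  ∑ t ∈ Finset.powersetCard r (Finset.univ : Finset (Fin n)),
    ∏ i ∈ t, hS.isHerm.eigenvalues i

/-- The `r`-th Newton transformation `P_r = Σ_{k=0}^r (-1)^k σ_{r-k} S^k`. -/
noncomputable def newton {n : ℕ} (S : Matrix (Fin n) (Fin n) ℝ)
    (hS : S.IsSymm) (r : ℕ) : Matrix (Fin n) (Fin n) ℝ :=
  ∑ k ∈ Finset.range (r + 1), ((-1 : ℝ) ^ k * sigmaEig S hS (r - k)) • S ^ k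

/-
Diagonalising `S`, the trace of `P_r S²` is `Σ_{k ≤ r} (-1)^k σ_{r-k} p_{k+2}` with `p_j` the power
sums of the eigenvalues. Newton's identity `m σ_m = Σ_{j=1}^m (-1)^{j-1} σ_{m-j} p_j` at `m = r + 2`
is exactly this sum plus the term `σ_{r+1} p_1 = σ_{r+1} σ_1`.
-/

open Finset MvPolynomial

namespace MvPolynomial

variable (σ : Type*) [Fintype σ] (R : Type*) [CommRing R]

theorem mul_esymm_eq_sum_range (m : ℕ) :
    m * esymm σ R m = ∑ i ∈ range m, (-1) ^ i * esymm σ R (m - 1 - i) * psum σ R (i + 1) := by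
  rw [mul_esymm_eq_sum, sum_filter, Nat.sum_antidiagonal_eq_sum_range_succ_mk, sum_range_succ,
    if_neg (lt_irrefl m), add_zero, mul_sum, ← sum_range_reflect]
  refine sum_congr rfl fun i hi => ?_
  have him : i < m := mem_range.mp hi
  rw [if_pos (by omega), show m - (m - 1 - i) = i + 1 by omega, ← mul_assoc, ← mul_assoc,
    ← pow_add, show m + 1 + (m - 1 - i) = i + 2 * (m - i) by omega, pow_add, pow_mul]
  simp

theorem sum_range_neg_one_pow_mul_esymm_mul_psum (r : ℕ) :
    ∑ k ∈ range (r + 1), (-1) ^ k * esymm σ R (r - k) * psum σ R (k + 2) =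
      esymm σ R 1 * esymm σ R (r + 1) - (r + 2) * esymm σ R (r + 2) := by
  have hnewton := mul_esymm_eq_sum_range σ R (r + 2)
  rw [sum_range_succ', psum_one, ← esymm_one] at hnewton
  simp only [show ∀ k, r + 2 - 1 - (k + 1) = r - k by omega, pow_succ, mul_neg_one, neg_mul,
    sum_neg_distrib] at hnewton
  push_cast at hnewton
  linear_combination hnewton

end MvPolynomial

theorem Matrix.IsHermitian.trace_pow {𝕜 ι : Type*} [RCLike 𝕜] [Fintype ι] [DecidableEq ι]
    {A : Matrix ι ι 𝕜} (hA : A.IsHermitian) (k : ℕ) :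
    (A ^ k).trace = ∑ i, (hA.eigenvalues i : 𝕜) ^ k := by
  conv_lhs => rw [hA.spectral_theorem, ← map_pow, Unitary.conjStarAlgAut_apply, trace_mul_cycle,
    Unitary.coe_star_mul_self, one_mul, diagonal_pow, trace_diagonal]
  simp

theorem sigmaEig_eq_eval_esymm {n : ℕ} (S : Matrix (Fin n) (Fin n) ℝ) (hS : S.IsSymm) (k : ℕ) :
    sigmaEig S hS k = eval hS.isHerm.eigenvalues (esymm (Fin n) ℝ k) := by
  simp [sigmaEig, esymm]

theorem trace_pow_eq_eval_psum {n : ℕ} (S : Matrix (Fin n) (Fin n) ℝ) (hS : S.IsSymm) (k : ℕ) :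
    (S ^ k).trace = eval hS.isHerm.eigenvalues (psum (Fin n) ℝ k) := by
  simp [hS.isHerm.trace_pow, psum]

theorem trace_newton_mul_sq {n : ℕ} (S : Matrix (Fin n) (Fin n) ℝ) (hS : S.IsSymm) (r : ℕ) :
    (newton S hS r * S ^ 2).trace =
      ∑ k ∈ range (r + 1), (-1) ^ k * sigmaEig S hS (r - k) * (S ^ (k + 2)).trace := by
  simp only [newton, sum_mul, trace_sum, smul_mul_assoc, trace_smul, ← pow_add, smul_eq_mul]

theorem stmt_7_general {n : ℕ} (S : Matrix (Fin n) (Fin n) ℝ) (hS : S.IsSymm)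
    (r : ℕ) :
    (newton S hS r * S ^ 2).trace =
      sigmaEig S hS 1 * sigmaEig S hS (r + 1) - (r + 2 : ℝ) * sigmaEig S hS (r + 2) := by
  rw [trace_newton_mul_sq]
  simp only [sigmaEig_eq_eval_esymm, trace_pow_eq_eval_psum S hS]
  simpa using congrArg (eval hS.isHerm.eigenvalues)
    (sum_range_neg_one_pow_mul_esymm_mul_psum (Fin n) ℝ r)

/-- `trace(P_r S²) = σ₁ σ_{r+1} − (r+2) σ_{r+2}`. -/
theorem stmt_7 {n : ℕ} (S : Matrix (Fin n) (Fin n) ℝ) (hS : S.IsSymm)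
    (r : ℕ) (hr : r ≤ n) :
    (newton S hS r * S ^ 2).trace =
      sigmaEig S hS 1 * sigmaEig S hS (r + 1) - (r + 2 : ℝ) * sigmaEig S hS (r + 2) :=
  stmt_7_general S hS r
end

section
/- If λ₁,…,λₙ are positive real numbers and 0 ≤ r < n−1, then H₁ H_{r+1} − H_{r+2} ≥ 0, where H_r = σ_r/C(n,r) is the normalized r-th elementary symmetric function; equality holds if and only if λ₁ = ⋯ = λₙ. -/
/-- The `r`-th elementary symmetric polynomial of `λ₁,…,λₙ`. -/
noncomputable def esymm {n : ℕ} (lam : Fin n → ℝ) (r : ℕ) : ℝ :=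
  ∑ t ∈ Finset.powersetCard r (Finset.univ : Finset (Fin n)), ∏ i ∈ t, lam i

/-- The normalized symmetric function `H_r = σ_r / C(n,r)`. -/
noncomputable def Hmean {n : ℕ} (lam : Fin n → ℝ) (r : ℕ) : ℝ :=
  esymm lam r / (n.choose r : ℝ)

open Finset

/-- Key bijection: summing over (set of size k+1, element inside) equals
summing over (set of size k, element outside). -/
lemma bij_lemma {n k : ℕ} (F : Finset (Fin n) → Fin n → ℝ) :
    ∑ T ∈ Finset.powersetCard (k + 1) (Finset.univ : Finset (Fin n)), ∑ i ∈ T, F T i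
      = ∑ U ∈ Finset.powersetCard k (Finset.univ : Finset (Fin n)), ∑ i ∈ Uᶜ, F (insert i U) i := by
  rw [Finset.sum_sigma', Finset.sum_sigma']
  refine Finset.sum_nbij' (fun p => ⟨p.1.erase p.2, p.2⟩) (fun p => ⟨insert p.2 p.1, p.2⟩)
    ?_ ?_ ?_ ?_ ?_
  · rintro ⟨T, i⟩ hp
    simp only [Finset.mem_sigma, Finset.mem_powersetCard_univ] at hp ⊢
    obtain ⟨hT, hi⟩ := hp
    refine ⟨?_, ?_⟩
    · rw [Finset.card_erase_of_mem hi, hT]; simp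
    · simp [hi]
  · rintro ⟨U, i⟩ hp
    simp only [Finset.mem_sigma, Finset.mem_powersetCard_univ, Finset.mem_compl] at hp ⊢
    obtain ⟨hU, hi⟩ := hp
    refine ⟨?_, Finset.mem_insert_self _ _⟩
    rw [Finset.card_insert_of_notMem hi, hU]
  · rintro ⟨T, i⟩ hp
    simp only [Finset.mem_sigma, Finset.mem_powersetCard_univ] at hp
    simp [Finset.insert_erase hp.2]
  · rintro ⟨U, i⟩ hp
    simp only [Finset.mem_sigma, Finset.mem_powersetCard_univ, Finset.mem_compl] at hp
    simp [Finset.erase_insert hp.2]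
  · rintro ⟨T, i⟩ hp
    simp only [Finset.mem_sigma, Finset.mem_powersetCard_univ] at hp
    simp [Finset.insert_erase hp.2]

lemma esymm_one {n : ℕ} (lam : Fin n → ℝ) : esymm lam 1 = ∑ i, lam i := by
  rw [esymm, Finset.powersetCard_one, Finset.sum_map]
  simp

/-- absorption: `(k+1) σ_{k+1} = ∑_{|U|=k} ∑_{i∉U} λᵢ ∏_U λ`. -/
lemma absorb {n k : ℕ} (lam : Fin n → ℝ) :
    ((k : ℝ) + 1) * esymm lam (k + 1)
      = ∑ U ∈ Finset.powersetCard k (Finset.univ : Finset (Fin n)),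
          ∑ i ∈ Uᶜ, lam i * ∏ j ∈ U, lam j := by
  have h := bij_lemma (n := n) (k := k) (fun T _ => ∏ j ∈ T, lam j)
  have hl : ∑ T ∈ Finset.powersetCard (k + 1) (Finset.univ : Finset (Fin n)),
      ∑ _i ∈ T, ∏ j ∈ T, lam j = ((k : ℝ) + 1) * esymm lam (k + 1) := by
    rw [esymm, Finset.mul_sum]
    refine Finset.sum_congr rfl fun T hT => ?_
    rw [Finset.sum_const, Finset.mem_powersetCard_univ.mp hT, nsmul_eq_mul]
    push_cast; ring
  rw [← hl, h]
  refine Finset.sum_congr rfl fun U hU => Finset.sum_congr rfl fun i hi => ?_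
  rw [Finset.prod_insert (Finset.mem_compl.mp hi)]

lemma Bval {n r : ℕ} (lam : Fin n → ℝ) :
    ∑ T ∈ Finset.powersetCard (r + 1) (Finset.univ : Finset (Fin n)),
        ∑ i ∈ T, lam i * ∏ j ∈ T, lam j
      = ∑ U ∈ Finset.powersetCard r (Finset.univ : Finset (Fin n)),
          (∏ j ∈ U, lam j) * ∑ i ∈ Uᶜ, lam i ^ 2 := by
  rw [bij_lemma (fun T i => lam i * ∏ j ∈ T, lam j)]
  refine Finset.sum_congr rfl fun U hU => ?_
  rw [Finset.mul_sum]
  refine Finset.sum_congr rfl fun i hi => ?_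
  rw [Finset.prod_insert (Finset.mem_compl.mp hi)]
  ring

lemma Cval {n r : ℕ} (lam : Fin n → ℝ) :
    ∑ U ∈ Finset.powersetCard r (Finset.univ : Finset (Fin n)),
        (∏ j ∈ U, lam j) * ∑ i ∈ Uᶜ, ∑ j ∈ Uᶜ.erase i, lam i * lam j
      = ((r : ℝ) + 1) * (((r : ℝ) + 2) * esymm lam (r + 2)) := by
  have step1 : ∑ U ∈ Finset.powersetCard r (Finset.univ : Finset (Fin n)),
        (∏ j ∈ U, lam j) * ∑ i ∈ Uᶜ, ∑ j ∈ Uᶜ.erase i, lam i * lam j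
      = ∑ U ∈ Finset.powersetCard r (Finset.univ : Finset (Fin n)),
          ∑ i ∈ Uᶜ, (∑ j ∈ (insert i U)ᶜ, lam j) * ∏ j ∈ insert i U, lam j := by
    refine Finset.sum_congr rfl fun U hU => ?_
    rw [Finset.mul_sum]
    refine Finset.sum_congr rfl fun i hi => ?_
    rw [Finset.compl_insert, Finset.prod_insert (Finset.mem_compl.mp hi), Finset.sum_mul]
    rw [Finset.mul_sum]
    refine Finset.sum_congr rfl fun j hj => ?_
    ring
  rw [step1, ← bij_lemma (fun T _ => (∑ j ∈ Tᶜ, lam j) * ∏ j ∈ T, lam j)]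
  have step2 : ∑ T ∈ Finset.powersetCard (r + 1) (Finset.univ : Finset (Fin n)),
      ∑ _i ∈ T, (∑ j ∈ Tᶜ, lam j) * ∏ j ∈ T, lam j
      = ((r : ℝ) + 1) * ∑ T ∈ Finset.powersetCard (r + 1) (Finset.univ : Finset (Fin n)),
          ∑ j ∈ Tᶜ, lam j * ∏ i ∈ T, lam i := by
    rw [Finset.mul_sum]
    refine Finset.sum_congr rfl fun T hT => ?_
    rw [Finset.sum_const, Finset.mem_powersetCard_univ.mp hT, nsmul_eq_mul, Finset.sum_mul]
    push_cast; ring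
  rw [step2, ← absorb lam]
  push_cast; ring

/-- split of `σ₁ σ_{r+1}`. -/
lemma split {n r : ℕ} (lam : Fin n → ℝ) :
    esymm lam 1 * esymm lam (r + 1)
      = ((r : ℝ) + 2) * esymm lam (r + 2)
        + ∑ U ∈ Finset.powersetCard r (Finset.univ : Finset (Fin n)),
            (∏ j ∈ U, lam j) * ∑ i ∈ Uᶜ, lam i ^ 2 := by
  rw [← Bval, esymm_one, esymm, Finset.mul_sum]
  have : ∀ T ∈ Finset.powersetCard (r + 1) (Finset.univ : Finset (Fin n)),
      (∑ i, lam i) * ∏ i ∈ T, lam i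
        = (∑ i ∈ Tᶜ, lam i * ∏ j ∈ T, lam j) + ∑ i ∈ T, lam i * ∏ j ∈ T, lam j := by
    intro T hT
    rw [← Finset.sum_compl_add_sum T lam, add_mul, Finset.sum_mul, Finset.sum_mul]
  rw [Finset.sum_congr rfl this, Finset.sum_add_distrib, ← absorb lam]
  push_cast; ring

/-- quadratic expansion over a finset. -/
lemma quad {n : ℕ} (lam : Fin n → ℝ) (V : Finset (Fin n)) :
    ∑ i ∈ V, ∑ j ∈ V.erase i, (lam i - lam j) ^ 2
      = 2 * ((V.card : ℝ) - 1) * (∑ i ∈ V, lam i ^ 2)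
        - 2 * ∑ i ∈ V, ∑ j ∈ V.erase i, lam i * lam j := by
  have hsym : ∑ i ∈ V, ∑ j ∈ V.erase i, lam j ^ 2
      = ∑ i ∈ V, ∑ j ∈ V.erase i, lam i ^ 2 := by
    refine Finset.sum_comm' (s' := fun j => V.erase j) (t' := V) fun i j => ?_
    simp only [Finset.mem_erase]
    constructor
    · rintro ⟨hi, hj, hjV⟩; exact ⟨⟨fun h => hj h.symm, hi⟩, hjV⟩
    · rintro ⟨⟨hi, hiV⟩, hj⟩; exact ⟨hiV, fun h => hi h.symm, hj⟩
  have hcard : ∀ i ∈ V, ∑ _j ∈ V.erase i, (lam i ^ 2 : ℝ)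
      = ((V.card : ℝ) - 1) * lam i ^ 2 := by
    intro i hi
    rw [Finset.sum_const, Finset.card_erase_of_mem hi, nsmul_eq_mul,
      Nat.cast_sub (Finset.card_pos.mpr ⟨i, hi⟩), Nat.cast_one]
  calc ∑ i ∈ V, ∑ j ∈ V.erase i, (lam i - lam j) ^ 2
      = ∑ i ∈ V, ∑ j ∈ V.erase i, (lam i ^ 2 + lam j ^ 2 - 2 * (lam i * lam j)) := by
        refine Finset.sum_congr rfl fun i _ => Finset.sum_congr rfl fun j _ => by ring
    _ = (∑ i ∈ V, ∑ j ∈ V.erase i, lam i ^ 2) + (∑ i ∈ V, ∑ j ∈ V.erase i, lam j ^ 2)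
        - 2 * ∑ i ∈ V, ∑ j ∈ V.erase i, lam i * lam j := by
        rw [Finset.mul_sum]
        rw [← Finset.sum_add_distrib, ← Finset.sum_sub_distrib]
        refine Finset.sum_congr rfl fun i _ => ?_
        rw [Finset.mul_sum, ← Finset.sum_add_distrib, ← Finset.sum_sub_distrib]
    _ = _ := by
        rw [hsym, Finset.sum_congr rfl hcard, ← Finset.mul_sum]
        ring

/-- master identity. -/
lemma master {n r : ℕ} (lam : Fin n → ℝ) (hrn : r + 2 ≤ n) :
    2 * (((n : ℝ) - r - 1) * (esymm lam 1 * esymm lam (r + 1))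
        - (n : ℝ) * ((r : ℝ) + 2) * esymm lam (r + 2))
      = ∑ U ∈ Finset.powersetCard r (Finset.univ : Finset (Fin n)),
          (∏ j ∈ U, lam j) * ∑ i ∈ Uᶜ, ∑ j ∈ Uᶜ.erase i, (lam i - lam j) ^ 2 := by
  have hB := split (r := r) lam
  have hC := Cval (r := r) lam
  have hQ : ∑ U ∈ Finset.powersetCard r (Finset.univ : Finset (Fin n)),
        (∏ j ∈ U, lam j) * ∑ i ∈ Uᶜ, ∑ j ∈ Uᶜ.erase i, (lam i - lam j) ^ 2
      = 2 * ((n : ℝ) - r - 1) * ∑ U ∈ Finset.powersetCard r (Finset.univ : Finset (Fin n)),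
            (∏ j ∈ U, lam j) * ∑ i ∈ Uᶜ, lam i ^ 2
        - 2 * ∑ U ∈ Finset.powersetCard r (Finset.univ : Finset (Fin n)),
            (∏ j ∈ U, lam j) * ∑ i ∈ Uᶜ, ∑ j ∈ Uᶜ.erase i, lam i * lam j := by
    rw [Finset.mul_sum, Finset.mul_sum, ← Finset.sum_sub_distrib]
    refine Finset.sum_congr rfl fun U hU => ?_
    have hUc : ((Uᶜ.card : ℝ)) = (n : ℝ) - r := by
      rw [Finset.card_compl, Finset.mem_powersetCard_univ.mp hU, Fintype.card_fin,
        Nat.cast_sub (by omega)]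
    rw [quad lam Uᶜ, hUc]
    ring
  rw [hQ]
  linear_combination (2 * ((n : ℝ) - r - 1)) * hB + 2 * hC

/-- For positive `λᵢ` and `0 ≤ r < n−1`, `H₁H_{r+1} − H_{r+2} ≥ 0`, with
equality iff all the `λᵢ` are equal. -/
theorem stmt_9 {n : ℕ} (lam : Fin n → ℝ) (hpos : ∀ i, 0 < lam i)
    (r : ℕ) (hr : r < n - 1) :
    0 ≤ Hmean lam 1 * Hmean lam (r + 1) - Hmean lam (r + 2) ∧
      (Hmean lam 1 * Hmean lam (r + 1) - Hmean lam (r + 2) = 0 ↔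
        ∀ i j, lam i = lam j) := by
  have hrn : r + 2 ≤ n := by omega
  set P : ℝ := ∑ U ∈ Finset.powersetCard r (Finset.univ : Finset (Fin n)),
      (∏ j ∈ U, lam j) * ∑ i ∈ Uᶜ, ∑ j ∈ Uᶜ.erase i, (lam i - lam j) ^ 2 with hPdef
  have hM := master (r := r) lam hrn
  -- constants
  have hm : (0 : ℝ) < (n : ℝ) - r - 1 := by
    have : (r : ℝ) + 2 ≤ (n : ℝ) := by exact_mod_cast hrn
    linarith
  have hN : (0 : ℝ) < (n : ℝ) := by
    have : 0 < n := by omega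
    exact_mod_cast this
  have hc1 : (0 : ℝ) < (n.choose (r + 1) : ℝ) := by
    exact_mod_cast Nat.choose_pos (by omega : r + 1 ≤ n)
  have hc2 : (0 : ℝ) < (n.choose (r + 2) : ℝ) := by
    exact_mod_cast Nat.choose_pos hrn
  have hcc : (n.choose (r + 2) : ℝ) * ((r : ℝ) + 2)
      = (n.choose (r + 1) : ℝ) * ((n : ℝ) - r - 1) := by
    have h2 : n.choose (r + 2) * (r + 2) = n.choose (r + 1) * (n - (r + 1)) :=
      Nat.choose_succ_right_eq n (r + 1)
    have h3 := congrArg (fun m : ℕ => (m : ℝ)) h2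
    push_cast [Nat.cast_sub (show r + 1 ≤ n by omega)] at h3
    linarith [h3]
  -- key formula
  have key : Hmean lam 1 * Hmean lam (r + 1) - Hmean lam (r + 2)
      = P / (2 * (n : ℝ) * (n.choose (r + 1) : ℝ) * ((n : ℝ) - r - 1)) := by
    have hc2e : (n.choose (r + 2) : ℝ) = (n.choose (r + 1) : ℝ) * ((n : ℝ) - r - 1) / ((r : ℝ) + 2) := by
      field_simp
      linarith [hcc]
    rw [Hmean, Hmean, Hmean, Nat.choose_one_right, hPdef, ← hM, hc2e]
    field_simp
  have hnn : ∀ U ∈ Finset.powersetCard r (Finset.univ : Finset (Fin n)),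
      0 ≤ (∏ j ∈ U, lam j) * ∑ i ∈ Uᶜ, ∑ j ∈ Uᶜ.erase i, (lam i - lam j) ^ 2 := by
    intro U _
    exact mul_nonneg (le_of_lt (Finset.prod_pos fun j _ => hpos j))
      (Finset.sum_nonneg fun i _ => Finset.sum_nonneg fun j _ => sq_nonneg _)
  have hPnn : 0 ≤ P := by
    rw [hPdef]; exact Finset.sum_nonneg hnn
  have hden : 0 < 2 * (n : ℝ) * (n.choose (r + 1) : ℝ) * ((n : ℝ) - r - 1) := by positivity
  constructor
  · rw [key]; exact div_nonneg hPnn hden.le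
  · rw [key, div_eq_zero_iff]
    constructor
    · rintro (hP | habs)
      · -- each summand of P vanishes
        rw [hPdef] at hP
        have hterms := (Finset.sum_eq_zero_iff_of_nonneg hnn).mp hP
        intro i j
        by_cases hij : i = j
        · rw [hij]
        · obtain ⟨U, hUsub, hUcard⟩ := Finset.exists_subset_card_eq
            (show r ≤ (Finset.univ \ ({i, j} : Finset (Fin n))).card by
              rw [Finset.card_sdiff_of_subset (Finset.subset_univ _), Finset.card_univ, Fintype.card_fin,
                Finset.card_insert_of_notMem (by simpa using hij), Finset.card_singleton]
              omega)
          have hU : U ∈ Finset.powersetCard r (Finset.univ : Finset (Fin n)) :=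
            Finset.mem_powersetCard_univ.mpr hUcard
          have hiU : i ∉ U := fun h => by
            have := hUsub h; simp at this
          have hjU : j ∉ U := fun h => by
            have := hUsub h; simp at this
          have hterm := hterms U hU
          have hQ0 : ∑ i' ∈ Uᶜ, ∑ j' ∈ Uᶜ.erase i', (lam i' - lam j') ^ 2 = 0 := by
            have hprod : 0 < ∏ j ∈ U, lam j := Finset.prod_pos fun j _ => hpos j
            exact (mul_eq_zero.mp hterm).resolve_left hprod.ne'
          have h1 := (Finset.sum_eq_zero_iff_of_nonneg
            (fun i' _ => Finset.sum_nonneg fun j' _ => sq_nonneg _)).mp hQ0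
          have h2 := (Finset.sum_eq_zero_iff_of_nonneg
            (fun j' _ => sq_nonneg (lam i - lam j'))).mp
            (h1 i (Finset.mem_compl.mpr hiU))
          have h3 := h2 j (Finset.mem_erase.mpr ⟨fun h => hij h.symm, Finset.mem_compl.mpr hjU⟩)
          have h4 : lam i - lam j = 0 := by
            have := sq_eq_zero_iff.mp h3
            exact this
          linarith
      · exact absurd habs hden.ne'
    · intro hall
      left
      rw [hPdef]
      refine Finset.sum_eq_zero fun U _ => ?_
      have : ∑ i ∈ Uᶜ, ∑ j ∈ Uᶜ.erase i, (lam i - lam j) ^ 2 = 0 :=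
        Finset.sum_eq_zero fun i _ => Finset.sum_eq_zero fun j _ => by
          rw [hall i j, sub_self]; ring
      rw [this, mul_zero]
end

section
/- If λ₁,…,λₙ are positive real numbers and 1 ≤ r ≤ n−1, then H_r/H_{r+1} ≥ 1/H₁, where H_k = σ_k/C(n,k); equality holds if and only if λ₁ = ⋯ = λₙ. -/
open Finset

section CommRing

variable {ι R : Type*} [CommRing R]

noncomputable def esymmOn (f : ι → R) (s : Finset ι) (k : ℕ) : R :=
  ∑ t ∈ s.powersetCard k, ∏ i ∈ t, f i

theorem esymmOn_one (f : ι → R) (s : Finset ι) : esymmOn f s 1 = ∑ i ∈ s, f i := by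
  simp [esymmOn, powersetCard_one]

theorem esymmOn_succ_of_mem [DecidableEq ι] (f : ι → R) {s : Finset ι} {i : ι} (hi : i ∈ s)
    (k : ℕ) :
    esymmOn f s (k + 1) = esymmOn f (s.erase i) (k + 1) + f i * esymmOn f (s.erase i) k := by
  have hdisj : Disjoint ((s.erase i).powersetCard (k + 1))
      (((s.erase i).powersetCard k).image (insert i)) := by
    simp only [disjoint_left, mem_image, mem_powersetCard, subset_erase, not_exists, not_and]
    rintro t ⟨⟨-, hit⟩, -⟩ u - rfl
    exact hit (mem_insert_self i u)
  have hinj : Set.InjOn (insert i) (↑((s.erase i).powersetCard k) : Set (Finset ι)) := by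
    intro u hu v hv huv
    simp only [mem_coe, mem_powersetCard, subset_erase] at hu hv
    rw [← erase_insert hu.1.2, huv, erase_insert hv.1.2]
  conv_lhs => rw [esymmOn, ← insert_erase hi, powersetCard_succ_insert (notMem_erase i s)]
  rw [sum_union hdisj, sum_image hinj, esymmOn, esymmOn, mul_sum]
  congr 1
  refine sum_congr rfl fun t ht => prod_insert ?_
  exact fun hit => notMem_erase i s ((mem_powersetCard.1 ht).1 hit)

theorem sum_esymmOn_erase [DecidableEq ι] (f : ι → R) (s : Finset ι) (k : ℕ) :
    ∑ i ∈ s, esymmOn f (s.erase i) k = (#s - k) * esymmOn f s k := by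
  simp only [esymmOn]
  rw [sum_comm' (t' := s.powersetCard k) (s' := fun t => s \ t)
    (fun i t => by simp only [mem_powersetCard, subset_erase, mem_sdiff]; tauto), mul_sum]
  refine sum_congr rfl fun t ht => ?_
  obtain ⟨hts, rfl⟩ := mem_powersetCard.1 ht
  rw [sum_const, card_sdiff_of_subset hts, nsmul_eq_mul, Nat.cast_sub (card_le_card hts)]

theorem sum_mul_esymmOn_erase [DecidableEq ι] (f : ι → R) (s : Finset ι) (k : ℕ) :
    ∑ i ∈ s, f i * esymmOn f (s.erase i) k = (k + 1) * esymmOn f s (k + 1) := by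
  have hsplit : ∀ i ∈ s, f i * esymmOn f (s.erase i) k
      = esymmOn f s (k + 1) - esymmOn f (s.erase i) (k + 1) := fun i hi => by
    rw [esymmOn_succ_of_mem f hi k]; ring
  rw [sum_congr rfl hsplit, sum_sub_distrib, sum_esymmOn_erase, sum_const, nsmul_eq_mul]
  push_cast; ring

theorem sum_sum_erase_comm [DecidableEq ι] (g : ι → ι → R) (s : Finset ι) :
    ∑ i ∈ s, ∑ j ∈ s.erase i, g i j = ∑ i ∈ s, ∑ j ∈ s.erase i, g j i := by
  rw [sum_congr rfl fun i hi => sum_erase_eq_sub (f := g i) hi,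
    sum_congr rfl fun i hi => sum_erase_eq_sub (f := fun j => g j i) hi,
    sum_sub_distrib, sum_sub_distrib, sum_comm]

theorem sum_mul_sub_mul_esymmOn_erase_erase [DecidableEq ι] (f : ι → R) {s : Finset ι} {i : ι}
    (hi : i ∈ s) (k : ℕ) :
    ∑ j ∈ s.erase i, f i * (f i - f j) * esymmOn f ((s.erase i).erase j) k
      = (#s - (k + 1)) * (f i * esymmOn f s (k + 1))
        - #s * (f i * esymmOn f (s.erase i) (k + 1)) := by
  have hcard : (#(s.erase i) : R) = #s - 1 := by
    rw [card_erase_of_mem hi, Nat.cast_pred (card_pos.2 ⟨i, hi⟩)]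
  calc ∑ j ∈ s.erase i, f i * (f i - f j) * esymmOn f ((s.erase i).erase j) k
      = f i ^ 2 * ∑ j ∈ s.erase i, esymmOn f ((s.erase i).erase j) k
        - f i * ∑ j ∈ s.erase i, f j * esymmOn f ((s.erase i).erase j) k := by
        rw [mul_sum, mul_sum, ← sum_sub_distrib]
        exact sum_congr rfl fun j _ => by ring
    _ = _ := by
        rw [sum_esymmOn_erase, sum_mul_esymmOn_erase, hcard, esymmOn_succ_of_mem f hi k]
        ring

theorem sum_sum_mul_sub_mul_esymmOn_erase_erase [DecidableEq ι] (f : ι → R) (s : Finset ι)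
    (k : ℕ) :
    ∑ i ∈ s, ∑ j ∈ s.erase i, f i * (f i - f j) * esymmOn f ((s.erase i).erase j) k
      = (#s - (k + 1)) * (∑ i ∈ s, f i) * esymmOn f s (k + 1)
        - #s * (k + 2) * esymmOn f s (k + 2) := by
  rw [sum_congr rfl fun i hi => sum_mul_sub_mul_esymmOn_erase_erase f hi k, sum_sub_distrib,
    ← mul_sum, ← mul_sum, ← sum_mul, sum_mul_esymmOn_erase]
  push_cast
  ring

theorem sum_sum_sq_sub_mul_esymmOn_erase_erase [DecidableEq ι] (f : ι → R) (s : Finset ι)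
    (k : ℕ) :
    ∑ i ∈ s, ∑ j ∈ s.erase i, (f i - f j) ^ 2 * esymmOn f ((s.erase i).erase j) k
      = 2 * ((#s - (k + 1)) * (∑ i ∈ s, f i) * esymmOn f s (k + 1)
        - #s * (k + 2) * esymmOn f s (k + 2)) := by
  set g : ι → ι → R := fun i j => f i * (f i - f j) * esymmOn f ((s.erase i).erase j) k
  calc ∑ i ∈ s, ∑ j ∈ s.erase i, (f i - f j) ^ 2 * esymmOn f ((s.erase i).erase j) k
      = ∑ i ∈ s, ∑ j ∈ s.erase i, (g i j + g j i) := by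
        refine sum_congr rfl fun i _ => sum_congr rfl fun j _ => ?_
        simp only [g, erase_right_comm (a := j)]
        ring
    _ = 2 * ∑ i ∈ s, ∑ j ∈ s.erase i, g i j := by
        simp only [sum_add_distrib, ← sum_sum_erase_comm g s]
        ring
    _ = _ := by rw [sum_sum_mul_sub_mul_esymmOn_erase_erase]

end CommRing

section LinearOrderedCommRing

variable {ι R : Type*} [CommRing R] [LinearOrder R] [IsStrictOrderedRing R]

theorem esymmOn_nonneg (f : ι → R) {s : Finset ι} (hf : ∀ i ∈ s, 0 ≤ f i) (k : ℕ) :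
    0 ≤ esymmOn f s k :=
  sum_nonneg fun _ ht => prod_nonneg fun i hi => hf i ((mem_powersetCard.1 ht).1 hi)

theorem esymmOn_pos (f : ι → R) {s : Finset ι} (hf : ∀ i ∈ s, 0 < f i) {k : ℕ}
    (hk : k ≤ #s) : 0 < esymmOn f s k :=
  sum_pos (fun _ ht => prod_pos fun i hi => hf i ((mem_powersetCard.1 ht).1 hi))
    (powersetCard_nonempty.2 hk)

theorem card_mul_esymmOn_add_two_le [DecidableEq ι] (f : ι → R) {s : Finset ι}
    (hf : ∀ i ∈ s, 0 ≤ f i) (k : ℕ) :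
    #s * (k + 2) * esymmOn f s (k + 2)
      ≤ (#s - (k + 1)) * (∑ i ∈ s, f i) * esymmOn f s (k + 1) := by
  have hsum := sum_sum_sq_sub_mul_esymmOn_erase_erase f s k
  have hnonneg : 0 ≤ ∑ i ∈ s, ∑ j ∈ s.erase i, (f i - f j) ^ 2
      * esymmOn f ((s.erase i).erase j) k :=
    sum_nonneg fun i _ => sum_nonneg fun j _ => mul_nonneg (sq_nonneg _)
      (esymmOn_nonneg f (fun l hl => hf l (mem_of_mem_erase (mem_of_mem_erase hl))) k)
  linarith

theorem card_mul_esymmOn_add_two_eq_iff [DecidableEq ι] (f : ι → R) {s : Finset ι}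
    (hf : ∀ i ∈ s, 0 < f i) {k : ℕ} (hk : k + 2 ≤ #s) :
    #s * (k + 2) * esymmOn f s (k + 2)
        = (#s - (k + 1)) * (∑ i ∈ s, f i) * esymmOn f s (k + 1)
      ↔ ∀ i ∈ s, ∀ j ∈ s, f i = f j := by
  have hweight : ∀ i ∈ s, ∀ j ∈ s.erase i, 0 < esymmOn f ((s.erase i).erase j) k := by
    intro i hi j hj
    refine esymmOn_pos f (fun l hl => hf l (mem_of_mem_erase (mem_of_mem_erase hl))) ?_
    rw [card_erase_of_mem hj, card_erase_of_mem hi]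
    omega
  have hterm_nonneg : ∀ i ∈ s, ∀ j ∈ s.erase i,
      0 ≤ (f i - f j) ^ 2 * esymmOn f ((s.erase i).erase j) k := fun i hi j hj =>
    mul_nonneg (sq_nonneg _) (hweight i hi j hj).le
  have hterm_eq_zero : ∀ i ∈ s, ∀ j ∈ s.erase i,
      (f i - f j) ^ 2 * esymmOn f ((s.erase i).erase j) k = 0 ↔ f i = f j := by
    intro i hi j hj
    rw [mul_eq_zero, or_iff_left (hweight i hi j hj).ne', sq_eq_zero_iff, sub_eq_zero]
  rw [eq_comm, ← sub_eq_zero, ← mul_right_inj' (two_ne_zero' R), mul_zero,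
    ← sum_sum_sq_sub_mul_esymmOn_erase_erase,
    sum_eq_zero_iff_of_nonneg fun i hi => sum_nonneg (hterm_nonneg i hi)]
  refine forall₂_congr fun i hi => ?_
  rw [sum_eq_zero_iff_of_nonneg (hterm_nonneg i hi)]
  constructor
  · intro h j hj
    rcases eq_or_ne j i with rfl | hji
    · rfl
    · exact (hterm_eq_zero i hi j (mem_erase.2 ⟨hji, hj⟩)).1 (h j (mem_erase.2 ⟨hji, hj⟩))
  · exact fun h j hj => (hterm_eq_zero i hi j hj).2 (h j (mem_of_mem_erase hj))

end LinearOrderedCommRing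

section Hmean

variable {n : ℕ} (lam : Fin n → ℝ)

theorem esymm_eq_esymmOn (r : ℕ) : esymm lam r = esymmOn lam univ r :=
  rfl

theorem Hmean_pos (hpos : ∀ i, 0 < lam i) {r : ℕ} (hr : r ≤ n) : 0 < Hmean lam r :=
  div_pos (esymmOn_pos lam (fun i _ => hpos i) (by simpa using hr))
    (Nat.cast_pos.2 (Nat.choose_pos hr))

theorem Hmean_one_mul_sub_Hmean {k : ℕ} (hk : k + 2 ≤ n) :
    Hmean lam 1 * Hmean lam (k + 1) - Hmean lam (k + 2)
      = ((n - (k + 1)) * (∑ i, lam i) * esymmOn lam univ (k + 1)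
          - n * (k + 2) * esymmOn lam univ (k + 2))
        / (n * (n - (k + 1)) * n.choose (k + 1)) := by
  have hchoose : (n.choose (k + 2) : ℝ) * (k + 2) = n.choose (k + 1) * (n - (k + 1)) := by
    have h := congrArg (Nat.cast (R := ℝ)) (Nat.choose_succ_right_eq n (k + 1))
    push_cast [Nat.cast_sub (by omega : k + 1 ≤ n)] at h
    linear_combination h
  have hn : (n : ℝ) - (k + 1) ≠ 0 := by
    rw [sub_ne_zero]; exact_mod_cast (by omega : n ≠ k + 1)
  have hn0 : (n : ℝ) ≠ 0 := by exact_mod_cast (by omega : n ≠ 0)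
  have hc : (n.choose (k + 1) : ℝ) ≠ 0 := Nat.cast_ne_zero.2 (Nat.choose_pos (by omega)).ne'
  have hc2 : (n.choose (k + 2) : ℝ) ≠ 0 := Nat.cast_ne_zero.2 (Nat.choose_pos hk).ne'
  simp only [Hmean, esymm_eq_esymmOn, esymmOn_one, Nat.choose_one_right]
  field_simp
  linear_combination (n * esymmOn lam univ (k + 2)) * hchoose

theorem cast_mul_sub_mul_choose_pos {k : ℕ} (hk : k + 2 ≤ n) :
    (0 : ℝ) < n * (n - (k + 1)) * n.choose (k + 1) := by
  have hnk : (k : ℝ) + 2 ≤ n := by exact_mod_cast hk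
  have hchoose := Nat.choose_pos (by omega : k + 1 ≤ n)
  exact mul_pos (mul_pos (by linarith) (by linarith)) (by positivity)

theorem Hmean_add_two_le_Hmean_one_mul (hpos : ∀ i, 0 < lam i) {k : ℕ} (hk : k + 2 ≤ n) :
    Hmean lam (k + 2) ≤ Hmean lam 1 * Hmean lam (k + 1) := by
  rw [← sub_nonneg, Hmean_one_mul_sub_Hmean lam hk]
  refine div_nonneg (sub_nonneg.2 ?_) (cast_mul_sub_mul_choose_pos hk).le
  simpa using card_mul_esymmOn_add_two_le lam (s := univ) (fun i _ => (hpos i).le) k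

theorem Hmean_add_two_eq_Hmean_one_mul_iff (hpos : ∀ i, 0 < lam i) {k : ℕ} (hk : k + 2 ≤ n) :
    Hmean lam (k + 2) = Hmean lam 1 * Hmean lam (k + 1) ↔ ∀ i j, lam i = lam j := by
  rw [eq_comm, ← sub_eq_zero, Hmean_one_mul_sub_Hmean lam hk, div_eq_zero_iff,
    or_iff_left (cast_mul_sub_mul_choose_pos hk).ne', sub_eq_zero, eq_comm]
  simpa using
    card_mul_esymmOn_add_two_eq_iff lam (s := univ) (fun i _ => hpos i) (by simpa using hk)

end Hmean

/-- For positive `λᵢ` and `1 ≤ r ≤ n−1`, `H_r/H_{r+1} ≥ 1/H₁`, with equality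
iff all the `λᵢ` are equal. -/
theorem stmt_12 {n : ℕ} (lam : Fin n → ℝ) (hpos : ∀ i, 0 < lam i)
    (r : ℕ) (hr1 : 1 ≤ r) (hr2 : r ≤ n - 1) :
    1 / Hmean lam 1 ≤ Hmean lam r / Hmean lam (r + 1) ∧
      (Hmean lam r / Hmean lam (r + 1) = 1 / Hmean lam 1 ↔
        ∀ i j, lam i = lam j) := by
  obtain ⟨k, rfl⟩ : ∃ k, r = k + 1 := ⟨r - 1, by omega⟩
  have hk : k + 2 ≤ n := by omega
  have hH1 := Hmean_pos lam hpos (by omega : 1 ≤ n)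
  have hH := Hmean_pos lam hpos hk
  rw [div_le_div_iff₀ hH1 hH, div_eq_div_iff hH.ne' hH1.ne', one_mul, mul_comm, eq_comm]
  exact ⟨Hmean_add_two_le_Hmean_one_mul lam hpos hk,
    Hmean_add_two_eq_Hmean_one_mul_iff lam hpos hk⟩
end

section
/- Newton's inequality: for real numbers λ₁,…,λₙ and 1 ≤ r ≤ n−1, H_r² ≥ H_{r−1} H_{r+1}, where H_k = σ_k/C(n,k); equality for positive λ_i holds if and only if λ₁ = ⋯ = λₙ. -/
/-! Differentiating `∏ᵢ (X + λᵢ)`, with `n + 1` factors, gives `(n + 1) ∏ⱼ (X + μⱼ)` for `n` reals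
`μⱼ` (Rolle's theorem keeps the roots real), and comparing coefficients shows `H_k(λ) = H_k(μ)`
for `k ≤ n`. This reduces Newton's inequality to `n = r + 1`. There, passing to `xᵢ = λᵢ⁻¹`
turns `(H_{r-1}, H_r, H_{r+1})` into `P • (H₂(x), H₁(x), 1)` with `P = ∏ λᵢ`, and
`H₁² - H₂ = ∑ᵢ ∑ⱼ (xᵢ - xⱼ)² / (2 n² (n - 1))`, which is nonnegative and
vanishes exactly when the `xᵢ` are equal. For the equality case, positivity survives the
reduction because a real-rooted polynomial with positive coefficients has negative roots, and
equal variables are detected by `H₁² = H₂`, which the reduction preserves. -/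

open Finset Polynomial

section

variable {n : ℕ}

lemma esymm_eq_eval (lam : Fin n → ℝ) (k : ℕ) :
    esymm lam k = MvPolynomial.eval lam (MvPolynomial.esymm (Fin n) ℝ k) := by
  simp [MvPolynomial.esymm, esymm]

lemma esymm_card (lam : Fin n → ℝ) : esymm lam n = ∏ i, lam i := by
  have h := powersetCard_self (univ : Finset (Fin n))
  rw [card_univ, Fintype.card_fin] at h
  rw [esymm, h, sum_singleton]

lemma esymm_const (c : ℝ) (k : ℕ) : esymm (fun _ : Fin n => c) k = n.choose k * c ^ k := by
  simp +contextual [esymm, prod_const, sum_congr rfl, mem_powersetCard]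

lemma esymm_pos {lam : Fin n → ℝ} (hlam : ∀ i, 0 < lam i) {k : ℕ} (hk : k ≤ n) :
    0 < esymm lam k :=
  sum_pos (fun t _ => prod_pos fun i _ => hlam i) (powersetCard_nonempty.2 (by simpa using hk))

lemma two_mul_esymm_two (x : Fin n → ℝ) : 2 * esymm x 2 = (∑ i, x i) ^ 2 - ∑ i, x i ^ 2 := by
  have newton := congrArg (MvPolynomial.eval x) (MvPolynomial.mul_esymm_eq_sum (Fin n) ℝ 2)
  simp [Nat.sum_antidiagonal_eq_sum_range_succ_mk, sum_range_succ, MvPolynomial.psum,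
    MvPolynomial.esymm_one, ← esymm_eq_eval] at newton
  rw [newton]
  ring

lemma esymm_inv_mul_prod {lam : Fin n → ℝ} (hlam : ∀ i, lam i ≠ 0) {k : ℕ} (hk : k ≤ n) :
    esymm (fun i => (lam i)⁻¹) k * ∏ i, lam i = esymm lam (n - k) := by
  rw [esymm, esymm, sum_mul]
  refine sum_nbij' (fun t => tᶜ) (fun t => tᶜ) ?_ ?_ (fun t _ => compl_compl t)
    (fun t _ => compl_compl t) fun t _ => ?_
  · intro t ht
    simp_all [card_compl]
  · intro t ht
    simp_all [card_compl, Nat.sub_sub_self hk]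
  · rw [prod_inv_distrib, ← prod_mul_prod_compl t lam,
      inv_mul_cancel_left₀ (prod_ne_zero_iff.2 fun i _ => hlam i)]

lemma coeff_prod_X_add_C (lam : Fin n → ℝ) {k : ℕ} (hk : k ≤ n) :
    (∏ i, (X + C (lam i))).coeff (n - k) = esymm lam k := by
  rw [prod_X_add_C_coeff _ _ (by simp), esymm, card_univ, Fintype.card_fin, Nat.sub_sub_self hk]

lemma eval_prod_X_add_C (lam : Fin n → ℝ) (x : ℝ) :
    (∏ i, (X + C (lam i))).eval x = ∑ k ∈ range (n + 1), esymm lam k * x ^ (n - k) := by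
  have vieta := Multiset.prod_X_add_C_eq_sum_esymm (univ.val.map lam)
  simp only [Multiset.map_map, Function.comp_def, Multiset.card_map, card_val, card_univ,
    Fintype.card_fin, esymm_map_val] at vieta
  rw [prod_eq_multiset_prod, vieta]
  simp [eval_finsetSum, eval_prod, esymm]

lemma pos_of_forall_esymm_pos {mu : Fin n → ℝ} (hmu : ∀ k ≤ n, 0 < esymm mu k) (j : Fin n) :
    0 < mu j := by
  by_contra! hj
  have hzero : (∏ i, (X + C (mu i))).eval (-mu j) = 0 := by
    simp only [eval_prod, eval_add, eval_X, eval_C]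
    exact prod_eq_zero (mem_univ j) (neg_add_cancel _)
  have hterm : ∀ k ∈ range (n + 1), 0 ≤ esymm mu k * (-mu j) ^ (n - k) := fun k hk =>
    mul_nonneg (hmu k (Nat.lt_succ_iff.1 (mem_range.1 hk))).le (pow_nonneg (by linarith) _)
  have hpos : 0 < ∑ k ∈ range (n + 1), esymm mu k * (-mu j) ^ (n - k) :=
    sum_pos' hterm ⟨n, self_mem_range_succ n, by simpa using hmu n le_rfl⟩
  rw [← eval_prod_X_add_C, hzero] at hpos
  exact hpos.false

lemma esymm_eq_choose_mul_Hmean (lam : Fin n → ℝ) {k : ℕ} (hk : k ≤ n) :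
    esymm lam k = n.choose k * Hmean lam k := by
  rw [Hmean, mul_div_cancel₀ _ (by exact_mod_cast (Nat.choose_pos hk).ne')]

lemma Hmean_card (lam : Fin n → ℝ) : Hmean lam n = ∏ i, lam i := by
  simp [Hmean, esymm_card]

lemma Hmean_const (c : ℝ) {k : ℕ} (hk : k ≤ n) : Hmean (fun _ : Fin n => c) k = c ^ k := by
  rw [Hmean, esymm_const, mul_div_cancel_left₀ _ (by exact_mod_cast (Nat.choose_pos hk).ne')]

lemma Hmean_pos_s13 {lam : Fin n → ℝ} (hlam : ∀ i, 0 < lam i) {k : ℕ} (hk : k ≤ n) :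
    0 < Hmean lam k :=
  div_pos (esymm_pos hlam hk) (by exact_mod_cast Nat.choose_pos hk)

lemma pos_of_forall_Hmean_pos {mu : Fin n → ℝ} (hmu : ∀ k ≤ n, 0 < Hmean mu k) (j : Fin n) :
    0 < mu j :=
  pos_of_forall_esymm_pos (fun k hk => by
    rw [esymm_eq_choose_mul_Hmean mu hk]
    exact mul_pos (by exact_mod_cast Nat.choose_pos hk) (hmu k hk)) j

lemma Hmean_sub_eq_prod_mul_Hmean_inv {lam : Fin n → ℝ} (hlam : ∀ i, lam i ≠ 0) {k : ℕ}
    (hk : k ≤ n) : Hmean lam (n - k) = (∏ i, lam i) * Hmean (fun i => (lam i)⁻¹) k := by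
  rw [Hmean, Hmean, ← esymm_inv_mul_prod hlam hk, Nat.choose_symm hk]
  ring

lemma sum_sum_sub_sq {ι : Type*} (s : Finset ι) (x : ι → ℝ) :
    ∑ i ∈ s, ∑ j ∈ s, (x i - x j) ^ 2 = 2 * (#s * ∑ i ∈ s, x i ^ 2 - (∑ i ∈ s, x i) ^ 2) := by
  simp only [sub_sq, sum_add_distrib, sum_sub_distrib, sum_const, ← mul_sum, ← sum_mul,
    nsmul_eq_mul]
  ring

lemma Hmean_one_sq_sub_Hmean_two (hn : 2 ≤ n) (x : Fin n → ℝ) :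
    Hmean x 1 ^ 2 - Hmean x 2 = (∑ i, ∑ j, (x i - x j) ^ 2) / (2 * n ^ 2 * (n - 1)) := by
  have hn1 : (n : ℝ) - 1 ≠ 0 := by
    have : (2 : ℝ) ≤ n := by exact_mod_cast hn
    linarith
  have he2 : esymm x 2 = ((∑ i, x i) ^ 2 - ∑ i, x i ^ 2) / 2 := by
    linarith [two_mul_esymm_two x]
  have he1 : esymm x 1 = ∑ i, x i := by simp [esymm_eq_eval, MvPolynomial.esymm_one]
  rw [sum_sum_sub_sq, Hmean, Hmean, he1, he2, Nat.choose_one_right, Nat.cast_choose_two,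
    card_univ, Fintype.card_fin]
  field_simp
  ring

lemma Hmean_two_le_Hmean_one_sq (hn : 2 ≤ n) (x : Fin n → ℝ) : Hmean x 2 ≤ Hmean x 1 ^ 2 := by
  have hn' : (2 : ℝ) ≤ n := by exact_mod_cast hn
  rw [← sub_nonneg, Hmean_one_sq_sub_Hmean_two hn]
  exact div_nonneg (by positivity) (by nlinarith)

lemma Hmean_one_sq_eq_Hmean_two_iff (hn : 2 ≤ n) (x : Fin n → ℝ) :
    Hmean x 1 ^ 2 = Hmean x 2 ↔ ∀ i j, x i = x j := by
  have hn' : (2 : ℝ) ≤ n := by exact_mod_cast hn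
  rw [← sub_eq_zero, Hmean_one_sq_sub_Hmean_two hn, div_eq_zero_iff, or_iff_left (by nlinarith),
    Fintype.sum_eq_zero_iff_of_nonneg fun i => by positivity]
  refine funext_iff.trans (forall_congr' fun i => ?_)
  rw [Pi.zero_apply, Fintype.sum_eq_zero_iff_of_nonneg fun j => sq_nonneg (x i - x j)]
  simp [funext_iff, sub_eq_zero]

lemma Polynomial.Splits.derivative {p : ℝ[X]} (hp : p.Splits) : (derivative p).Splits := by
  rw [splits_iff_card_roots] at hp ⊢
  have := card_roots_le_derivative p
  exact le_antisymm (card_roots' _) (by rw [natDegree_derivative]; omega)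

lemma Multiset.exists_fin_map_eq {α : Type*} {s : Multiset α} (hs : card s = n) :
    ∃ f : Fin n → α, univ.val.map f = s := by
  obtain ⟨l, rfl⟩ : ∃ l : List α, (l : Multiset α) = s := Quotient.exists_rep s
  rw [Multiset.coe_card] at hs
  subst hs
  exact ⟨l.get, by rw [Fin.univ_val_map, List.ofFn_get]⟩

lemma exists_derivative_prod_X_add_C (lam : Fin (n + 1) → ℝ) :
    ∃ mu : Fin n → ℝ,
      derivative (∏ i, (X + C (lam i))) = C ((n : ℝ) + 1) * ∏ j, (X + C (mu j)) := by
  have hmonic : (∏ i, (X + C (lam i))).Monic := monic_prod_of_monic _ _ fun i _ => monic_X_add_C _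
  have hdeg : (∏ i, (X + C (lam i))).natDegree = n + 1 := by
    rw [natDegree_prod_of_monic _ _ fun i _ => monic_X_add_C _]
    simp
  set q := derivative (∏ i, (X + C (lam i)))
  have hsplits : q.Splits := (Splits.prod fun i _ => Splits.X_add_C (lam i)).derivative
  obtain ⟨mu, hmu⟩ := Multiset.exists_fin_map_eq (n := n) (s := q.roots.map (- ·))
    (by rw [Multiset.card_map, ← hsplits.natDegree_eq_card_roots, natDegree_derivative, hdeg]; rfl)
  refine ⟨mu, ?_⟩
  have hprod : ∏ j, (X + C (mu j)) = (q.roots.map fun a => X - C a).prod := by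
    have h := congrArg (fun s => (s.map fun a => X + C a).prod) hmu
    simp only [Multiset.map_map, Function.comp_def] at h
    rw [prod_eq_multiset_prod, h]
    simp [sub_eq_add_neg]
  conv_lhs => rw [hsplits.eq_prod_roots]
  rw [hprod, leadingCoeff_derivative, hmonic.leadingCoeff, hdeg]
  simp

lemma exists_Hmean_eq_of_succ (lam : Fin (n + 1) → ℝ) :
    ∃ mu : Fin n → ℝ, ∀ k ≤ n, Hmean lam k = Hmean mu k := by
  obtain ⟨mu, hmu⟩ := exists_derivative_prod_X_add_C lam
  refine ⟨mu, fun k hk => ?_⟩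
  have hcoeff := congrArg (coeff · (n - k)) hmu
  simp only [coeff_derivative, coeff_C_mul] at hcoeff
  rw [show n - k + 1 = n + 1 - k by omega, coeff_prod_X_add_C lam (by omega),
    coeff_prod_X_add_C mu hk, Nat.cast_sub hk] at hcoeff
  have hchoose := congrArg (Nat.cast (R := ℝ)) (Nat.choose_mul_succ_eq n k)
  push_cast [Nat.cast_sub (show k ≤ n + 1 by omega)] at hchoose
  rw [Hmean, Hmean, div_eq_div_iff (by exact_mod_cast (Nat.choose_pos (by omega)).ne')
    (by exact_mod_cast (Nat.choose_pos hk).ne')]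
  refine mul_right_cancel₀ (b := (n : ℝ) + 1) (by positivity) ?_
  linear_combination esymm lam k * hchoose + ((n + 1).choose k : ℝ) * hcoeff

lemma Hmean_sq_sub_mul_eq_prod_sq_mul {k : ℕ} {lam : Fin (k + 2) → ℝ} (hlam : ∀ i, lam i ≠ 0) :
    Hmean lam (k + 1) ^ 2 - Hmean lam k * Hmean lam (k + 2) =
      (∏ i, lam i) ^ 2 * (Hmean (fun i => (lam i)⁻¹) 1 ^ 2 - Hmean (fun i => (lam i)⁻¹) 2) := by
  have h1 : Hmean lam (k + 1) = (∏ i, lam i) * Hmean (fun i => (lam i)⁻¹) 1 :=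
    Hmean_sub_eq_prod_mul_Hmean_inv hlam (k := 1) (by omega)
  have h2 : Hmean lam k = (∏ i, lam i) * Hmean (fun i => (lam i)⁻¹) 2 :=
    Hmean_sub_eq_prod_mul_Hmean_inv hlam (k := 2) (by omega)
  rw [h1, h2, Hmean_card]
  ring

lemma Hmean_mul_Hmean_le_sq {s n : ℕ} (hn : s + 2 ≤ n) (lam : Fin n → ℝ) :
    Hmean lam s * Hmean lam (s + 2) ≤ Hmean lam (s + 1) ^ 2 := by
  induction n, hn using Nat.le_induction with
  | base =>
    by_cases hzero : ∃ i, lam i = 0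
    · obtain ⟨i, hi⟩ := hzero
      rw [Hmean_card, prod_eq_zero (mem_univ i) hi, mul_zero]
      positivity
    · have hgap := Hmean_sq_sub_mul_eq_prod_sq_mul fun i hi => hzero ⟨i, hi⟩
      have hvar := Hmean_two_le_Hmean_one_sq (by omega) fun i => (lam i)⁻¹
      nlinarith [sq_nonneg (∏ i, lam i)]
  | succ n hn ih =>
    obtain ⟨mu, hmu⟩ := exists_Hmean_eq_of_succ lam
    rw [hmu s (by omega), hmu (s + 2) hn, hmu (s + 1) (by omega)]
    exact ih mu

lemma eq_of_Hmean_sq_eq_mul {s n : ℕ} (hn : s + 2 ≤ n) {lam : Fin n → ℝ} (hlam : ∀ i, 0 < lam i)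
    (heq : Hmean lam (s + 1) ^ 2 = Hmean lam s * Hmean lam (s + 2)) : ∀ i j, lam i = lam j := by
  induction n, hn using Nat.le_induction with
  | base =>
    have hprod : (∏ i, lam i) ^ 2 ≠ 0 := (pow_pos (prod_pos fun i _ => hlam i) 2).ne'
    have hgap := Hmean_sq_sub_mul_eq_prod_sq_mul fun i => (hlam i).ne'
    rw [heq, sub_self, eq_comm, mul_eq_zero, or_iff_right hprod, sub_eq_zero,
      Hmean_one_sq_eq_Hmean_two_iff (by omega)] at hgap
    exact fun i j => inv_injective (hgap i j)
  | succ n hn ih =>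
    obtain ⟨mu, hmu⟩ := exists_Hmean_eq_of_succ lam
    have hmu_pos := pos_of_forall_Hmean_pos fun k hk => hmu k hk ▸ Hmean_pos_s13 hlam (by omega)
    rw [hmu s (by omega), hmu (s + 2) hn, hmu (s + 1) (by omega)] at heq
    have hvar := (Hmean_one_sq_eq_Hmean_two_iff (by omega) mu).2 (ih hmu_pos heq)
    rw [← hmu 1 (by omega), ← hmu 2 (by omega)] at hvar
    exact (Hmean_one_sq_eq_Hmean_two_iff (by omega) lam).1 hvar

end

/-- Newton's inequality `H_r² ≥ H_{r−1}H_{r+1}` for `1 ≤ r ≤ n−1`; for positive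
`λᵢ` equality holds iff all the `λᵢ` are equal. -/
theorem stmt_13 {n : ℕ} (lam : Fin n → ℝ)
    (r : ℕ) (hr1 : 1 ≤ r) (hr2 : r ≤ n - 1) :
    Hmean lam (r - 1) * Hmean lam (r + 1) ≤ Hmean lam r ^ 2 ∧
      ((∀ i, 0 < lam i) →
        (Hmean lam r ^ 2 = Hmean lam (r - 1) * Hmean lam (r + 1) ↔
          ∀ i j, lam i = lam j)) := by
  obtain ⟨s, rfl⟩ : ∃ s, r = s + 1 := ⟨r - 1, by omega⟩
  have hn : s + 2 ≤ n := by omega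
  refine ⟨Hmean_mul_Hmean_le_sq hn lam, fun hlam => ⟨eq_of_Hmean_sq_eq_mul hn hlam, fun hall => ?_⟩⟩
  obtain ⟨c, rfl⟩ : ∃ c, lam = fun _ => c := ⟨lam ⟨0, by omega⟩, funext fun i => hall i _⟩
  rw [Nat.add_sub_cancel, Hmean_const c (by omega), Hmean_const c (by omega), Hmean_const c hn]
  ring
end
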